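/- Let p ≥ 1, ℓ ≥ 0, b₀ ≥ 1, w₀ ≥ 0 be integers and s₀ = b₀ + w₀. Define the weighted history counts h_{n,b} by h_{0,b} = 1 if b = b₀ and 0 otherwise, and h_{n+1,b} = (b−1)·h_{n,b−1} + (s₀ + n + ℓ⌊n/p⌋ − b)·h_{n,b}, and for r ≥ 0 set h_n^{(r)} = Σ_b b(b−1)⋯(b−r+1)·h_{n,b} (with h_n^{(0)} = Σ_b h_{n,b}). Then for every n ≥ 0 and every r ≥ 1: h_{n+1}^{(r)} = (s₀ + n + ℓ⌊n/p⌋ + r)·h_n^{(r)} + r(r−1)·h_n^{(r−1)}. -/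

import Mathlib

open Real

/-- `histMass p ℓ b₀ w₀ n b` is the number of histories of the Young–Pólya urn of
period `p` and parameter `ℓ` which after `n` steps contain `b` black balls (among
`b₀ + w₀ + n + ℓ⌊n/p⌋` balls in total):
`h_{0,b} = [b = b₀]` and `h_{n+1,b} = (b-1) h_{n,b-1} + (s₀ + n + ℓ⌊n/p⌋ - b) h_{n,b}`. -/
noncomputable def histMass (p ℓ b₀ w₀ : ℕ) : ℕ → ℕ → ℝ
  | 0, b => if b = b₀ then 1 else 0
  | n + 1, b =>
    ((b - 1 : ℕ) : ℝ) * histMass p ℓ b₀ w₀ n (b - 1) +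
      (((b₀ + w₀ + n + ℓ * (n / p) : ℕ) : ℝ) - (b : ℝ)) * histMass p ℓ b₀ w₀ n b

/-! Write `x^{(r)} = x (x - 1) ⋯ (x - r + 1)` and `s_n = b₀ + w₀ + n + ℓ⌊n/p⌋`. Transposing the
recurrence for `h_{n+1,b}` gives `Σ_b g(b) h_{n+1,b} = Σ_b (b g(b + 1) + (s_n - b) g(b)) h_{n,b}`
for every weight `g`. For `g = x^{(r)}` the falling-factorial identity
`b (b + 1)^{(r)} = (b + r) b^{(r)} + r (r - 1) b^{(r-1)}` turns the right-hand side into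
`(s_n + r) h_n^{(r)} + r (r - 1) h_n^{(r-1)}`. All sums are finite, as `h_{n,b} = 0` for `b > b₀ + n`. -/

open Finset

theorem mul_prod_range_add_one_sub {R : Type*} [CommRing R] (x : R) (r : ℕ) :
    x * ∏ t ∈ range r, (x + 1 - t) =
      (x + r) * ∏ t ∈ range r, (x - t) + r * (r - 1) * ∏ t ∈ range (r - 1), (x - t) := by
  induction r with
  | zero => simp
  | succ m ih =>
    cases m with
    | zero => simp [mul_comm]
    | succ k =>
      simp only [Nat.add_sub_cancel, prod_range_succ] at ih ⊢
      push_cast at ih ⊢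
      linear_combination (x - k) * ih

section HistMass

variable (p ℓ b₀ w₀ : ℕ)

theorem histMass_eq_zero_of_lt {n b : ℕ} (h : b₀ + n < b) : histMass p ℓ b₀ w₀ n b = 0 := by
  induction n generalizing b with
  | zero => simp only [histMass, ite_eq_right_iff, one_ne_zero, imp_false]; omega
  | succ m ih => simp [histMass, ih (b := b - 1) (by omega), ih (b := b) (by omega)]

theorem tsum_mul_histMass_eq_sum (g : ℕ → ℝ) (n : ℕ) :
    ∑' b, g b * histMass p ℓ b₀ w₀ n b = ∑ b ∈ range (b₀ + n + 1), g b * histMass p ℓ b₀ w₀ n b :=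
  tsum_eq_sum fun b hb => by
    rw [histMass_eq_zero_of_lt p ℓ b₀ w₀ (by simpa using hb), mul_zero]

theorem tsum_mul_histMass_succ (g : ℕ → ℝ) (n : ℕ) :
    ∑' b, g b * histMass p ℓ b₀ w₀ (n + 1) b =
      ∑' b : ℕ, ((b : ℝ) * g (b + 1) + (((b₀ + w₀ + n + ℓ * (n / p) : ℕ) : ℝ) - b) * g b) *
        histMass p ℓ b₀ w₀ n b := by
  rw [tsum_mul_histMass_eq_sum, tsum_mul_histMass_eq_sum]
  simp only [histMass, mul_add, sum_add_distrib]
  rw [sum_range_succ', sum_range_succ (fun b => g b * (_ * histMass p ℓ b₀ w₀ n b)),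
    histMass_eq_zero_of_lt p ℓ b₀ w₀ (b := b₀ + (n + 1)) (by omega)]
  -- the `b = 0` term of the shifted sum vanishes because `((0 - 1 : ℕ) : ℝ) = 0`
  simp only [Nat.add_sub_cancel, Nat.zero_sub, Nat.cast_zero, zero_mul, mul_zero, add_zero]
  rw [← sum_add_distrib]
  exact sum_congr (by rw [add_assoc]) fun b _ => by ring

end HistMass

theorem young_polya_urn_moment_recurrence_general
    (p ℓ b₀ w₀ : ℕ) (n r : ℕ) :
    (∑' b : ℕ, (∏ t ∈ Finset.range r, ((b : ℝ) - (t : ℝ))) * histMass p ℓ b₀ w₀ (n + 1) b) =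
      (((b₀ + w₀ + n + ℓ * (n / p) : ℕ) : ℝ) + (r : ℝ)) *
          (∑' b : ℕ, (∏ t ∈ Finset.range r, ((b : ℝ) - (t : ℝ))) * histMass p ℓ b₀ w₀ n b) +
        (r : ℝ) * ((r : ℝ) - 1) *
          (∑' b : ℕ, (∏ t ∈ Finset.range (r - 1), ((b : ℝ) - (t : ℝ))) * histMass p ℓ b₀ w₀ n b) := by
  rw [tsum_mul_histMass_succ, tsum_mul_histMass_eq_sum, tsum_mul_histMass_eq_sum,
    tsum_mul_histMass_eq_sum, mul_sum, mul_sum, ← sum_add_distrib]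
  refine sum_congr rfl fun b _ => ?_
  have key := mul_prod_range_add_one_sub (b : ℝ) r
  push_cast
  linear_combination histMass p ℓ b₀ w₀ n b * key

/-- **Theorem (recurrence for the factorial moment numerators).**
With `s₀ = b₀ + w₀` and `h_n^{(r)} = Σ_b b(b-1)⋯(b-r+1) h_{n,b}`, one has, for every
`n ≥ 0` and `r ≥ 1`,
`h_{n+1}^{(r)} = (s₀ + n + ℓ⌊n/p⌋ + r) h_n^{(r)} + r(r-1) h_n^{(r-1)}`. -/
theorem young_polya_urn_moment_recurrence
    (p ℓ b₀ w₀ : ℕ) (hp : 1 ≤ p) (hb : 1 ≤ b₀) (n r : ℕ) (hr : 1 ≤ r) :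
    (∑' b : ℕ, (∏ t ∈ Finset.range r, ((b : ℝ) - (t : ℝ))) * histMass p ℓ b₀ w₀ (n + 1) b) =
      (((b₀ + w₀ + n + ℓ * (n / p) : ℕ) : ℝ) + (r : ℝ)) *
          (∑' b : ℕ, (∏ t ∈ Finset.range r, ((b : ℝ) - (t : ℝ))) * histMass p ℓ b₀ w₀ n b) +
        (r : ℝ) * ((r : ℝ) - 1) *
          (∑' b : ℕ, (∏ t ∈ Finset.range (r - 1), ((b : ℝ) - (t : ℝ))) * histMass p ℓ b₀ w₀ n b) :=
  young_polya_urn_moment_recurrence_general p ℓ b₀ w₀ n r
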